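/- arXiv:2604.09040 — 5 statements merged into one kernel-verified Lean document; each statement's English description precedes it below -/
import Mathlib

section
/- (Fiducial focusing implies global norm-one localization.) Let H be a complex Hilbert space and E a map assigning to each subset B of EuclideanSpace ℝ (Fin 3) a continuous linear operator E B : H →L[ℂ] H such that: (i) 0 ≤ E B ≤ 1 for every B (in the operator order); (ii) E is monotone: B ⊆ B' implies E B ≤ E B'; (iii) there is a family U of unitary operators on H indexed by a ∈ EuclideanSpace ℝ (Fin 3) with U a * E B * (U a)⋆ = E ((fun x => x + a) '' B) for all a and B; (iv) fiducial focusing holds: for every r > 0 and every ε > 0 there exists ψ ∈ H with ‖ψ‖ = 1 and Re⟪ψ, E (Metric.ball 0 r) ψ⟫ ≥ 1 - ε. Then for every nonempty open set O ⊆ EuclideanSpace ℝ (Fin 3), ‖E O‖ = 1. -/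
/-!
A nonempty open set `O` contains a ball `ball a r`, and covariance identifies `E (ball a r)` with
`E (ball 0 r)` conjugated by the unitary `U a`. Translating a state focused on `ball 0 r` by `U a`
therefore gives a unit vector `φ` with `1 - ε ≤ re ⟪φ, E O φ⟫ ≤ ‖E O‖` for every `ε > 0`, while
`0 ≤ E O ≤ 1` gives `‖E O‖ ≤ 1`.
-/

open scoped InnerProductSpace

namespace ContinuousLinearMap

open RCLike

section RCLike

variable {𝕜 E : Type*} [RCLike 𝕜] [NormedAddCommGroup E] [InnerProductSpace 𝕜 E]

lemma re_inner_map_self_le_of_le {S T : E →L[𝕜] E} (h : S ≤ T) (x : E) :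
    re ⟪x, S x⟫_𝕜 ≤ re ⟪x, T x⟫_𝕜 := by
  have := ((le_def S T).mp h).re_inner_nonneg_right x
  rwa [sub_apply, inner_sub_right, map_sub, sub_nonneg] at this

lemma re_inner_map_self_le_opNorm (T : E →L[𝕜] E) {x : E} (hx : ‖x‖ = 1) :
    re ⟪x, T x⟫_𝕜 ≤ ‖T‖ :=
  calc re ⟪x, T x⟫_𝕜 ≤ ‖x‖ * ‖T x‖ := re_inner_le_norm x (T x)
    _ ≤ ‖T‖ := by simpa [hx] using T.le_opNorm x

variable [CompleteSpace E]

lemma norm_map_of_star_mul_self_eq_one {U : E →L[𝕜] E} (hU : star U * U = 1) (x : E) :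
    ‖U x‖ = ‖x‖ :=
  U.norm_map_iff_adjoint_comp_self.mpr hU x

lemma inner_map_conj_map_of_star_mul_self_eq_one {U : E →L[𝕜] E} (hU : star U * U = 1)
    (T : E →L[𝕜] E) (x : E) : ⟪U x, (U * T * star U) (U x)⟫_𝕜 = ⟪x, T x⟫_𝕜 := by
  change ⟪U x, U (T (star U (U x)))⟫_𝕜 = _
  rw [show star U (U x) = x from congr($hU x), U.inner_map_map_iff_adjoint_comp_self.mpr hU]

end RCLike

variable {H : Type*} [NormedAddCommGroup H] [InnerProductSpace ℂ H] [CompleteSpace H]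

lemma norm_le_one_of_nonneg_of_le_one {T : H →L[ℂ] H} (h₀ : 0 ≤ T) (h₁ : T ≤ 1) : ‖T‖ ≤ 1 :=
  (CStarAlgebra.norm_le_norm_of_nonneg_of_le h₀ h₁).trans (norm_id_le (𝕜 := ℂ) (E := H))

lemma norm_eq_one_of_forall_re_inner_map_self_ge {T : H →L[ℂ] H} (h₀ : 0 ≤ T) (h₁ : T ≤ 1)
    (h : ∀ ε > (0 : ℝ), ∃ x : H, ‖x‖ = 1 ∧ 1 - ε ≤ re ⟪x, T x⟫_ℂ) : ‖T‖ = 1 :=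
  (norm_le_one_of_nonneg_of_le_one h₀ h₁).antisymm <| le_of_forall_sub_le fun ε hε ↦ by
    obtain ⟨x, hx, hTx⟩ := h ε hε
    exact hTx.trans (T.re_inner_map_self_le_opNorm hx)

end ContinuousLinearMap

open ContinuousLinearMap Metric

/-- Fiducial focusing implies global norm-one localization: a translation-covariant
effect-valued set function on ℝ³ which admits arbitrarily well localized states around
the origin has norm-one effects on every nonempty open set. -/
theorem stmt_2
    {H : Type*} [NormedAddCommGroup H] [InnerProductSpace ℂ H] [CompleteSpace H]
    (E : Set (EuclideanSpace ℝ (Fin 3)) → (H →L[ℂ] H))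
    (hpos : ∀ B, 0 ≤ E B ∧ E B ≤ 1)
    (hmono : ∀ B B', B ⊆ B' → E B ≤ E B')
    (U : EuclideanSpace ℝ (Fin 3) → (H →L[ℂ] H))
    (hunitary : ∀ a, star (U a) * U a = 1 ∧ U a * star (U a) = 1)
    (hcov : ∀ a B, U a * E B * star (U a) = E ((fun x => x + a) '' B))
    (hfocus : ∀ r > (0 : ℝ), ∀ ε > (0 : ℝ), ∃ ψ : H, ‖ψ‖ = 1 ∧
      1 - ε ≤ (⟪ψ, E (Metric.ball 0 r) ψ⟫_ℂ).re) :
    ∀ O : Set (EuclideanSpace ℝ (Fin 3)), IsOpen O → O.Nonempty → ‖E O‖ = 1 := by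
  rintro O hO ⟨a, ha⟩
  obtain ⟨r, hr, hball⟩ := isOpen_iff.mp hO a ha
  refine norm_eq_one_of_forall_re_inner_map_self_ge (hpos O).1 (hpos O).2 fun ε hε ↦ ?_
  obtain ⟨ψ, hψ, hψE⟩ := hfocus r hr ε hε
  have hUa := (hunitary a).1
  refine ⟨U a ψ, by rw [norm_map_of_star_mul_self_eq_one hUa, hψ], ?_⟩
  have htranslate : (fun x => x + a) '' ball 0 r = ball a r := by simp
  calc 1 - ε ≤ (⟪ψ, E (ball 0 r) ψ⟫_ℂ).re := hψE
    _ = (⟪U a ψ, E (ball a r) (U a ψ)⟫_ℂ).re := by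
      rw [← htranslate, ← hcov, inner_map_conj_map_of_star_mul_self_eq_one hUa]
    _ ≤ (⟪U a ψ, E O (U a ψ)⟫_ℂ).re := re_inner_map_self_le_of_le (hmono _ _ hball) _
end

section
/- Let μ be a probability measure on a metric space X and suppose x₁ and x₂ are two distinct points in the topological support of μ. Then for every η > 0 with 4 * η < dist x₁ x₂, setting δ := min (μ (Metric.ball x₁ η)) (μ (Metric.ball x₂ η)), one has δ > 0 and μ (Metric.ball y η) ≤ 1 - δ for every y ∈ X. (Core estimate showing that a non-point smearing measure gives localization probabilities uniformly bounded away from 1.) -/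
open MeasureTheory Metric

theorem disjoint_ball_or_disjoint_ball_of_two_mul_add_le_dist {X : Type*} [PseudoMetricSpace X]
    {x₁ x₂ : X} {r s : ℝ} (h : 2 * (r + s) ≤ dist x₁ x₂) (y : X) :
    Disjoint (ball y r) (ball x₁ s) ∨ Disjoint (ball y r) (ball x₂ s) := by
  by_contra! ⟨h₁, h₂⟩
  have hy₁ : dist y x₁ < r + s := lt_of_not_ge (mt ball_disjoint_ball h₁)
  have hy₂ : dist y x₂ < r + s := lt_of_not_ge (mt ball_disjoint_ball h₂)
  linarith [dist_triangle_left x₁ x₂ y]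

theorem measure_le_one_sub_of_disjoint {X : Type*} [MeasurableSpace X] {μ : Measure X}
    [IsProbabilityMeasure μ] {s t : Set X} (ht : MeasurableSet t) (h : Disjoint s t) :
    μ s ≤ 1 - μ t :=
  (measure_mono h.subset_compl_right).trans_eq (prob_compl_eq_one_sub ht)

theorem stmt_3_general
    {X : Type*} [MetricSpace X] [MeasurableSpace X] [BorelSpace X]
    (μ : Measure X) [IsProbabilityMeasure μ]
    (x₁ x₂ : X)
    (hsupp₁ : ∀ U : Set X, IsOpen U → x₁ ∈ U → 0 < μ U)
    (hsupp₂ : ∀ U : Set X, IsOpen U → x₂ ∈ U → 0 < μ U) :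
    ∀ η > (0 : ℝ), 4 * η < dist x₁ x₂ →
      0 < min (μ (Metric.ball x₁ η)) (μ (Metric.ball x₂ η)) ∧
      ∀ y : X, μ (Metric.ball y η) ≤
        1 - min (μ (Metric.ball x₁ η)) (μ (Metric.ball x₂ η)) := by
  intro η hη hdist
  refine ⟨lt_min (hsupp₁ _ isOpen_ball (mem_ball_self hη))
    (hsupp₂ _ isOpen_ball (mem_ball_self hη)), fun y => ?_⟩
  rcases disjoint_ball_or_disjoint_ball_of_two_mul_add_le_dist
    (r := η) (s := η) (by linarith) y with h | h
  · exact (measure_le_one_sub_of_disjoint measurableSet_ball h).trans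
      (tsub_le_tsub_left (min_le_left _ _) 1)
  · exact (measure_le_one_sub_of_disjoint measurableSet_ball h).trans
      (tsub_le_tsub_left (min_le_right _ _) 1)

/-- If a probability measure has two distinct points `x₁ ≠ x₂` in its topological support
(every open neighborhood of each has positive measure), then for every `η > 0` with
`4η < dist x₁ x₂` the localization probabilities `μ (ball y η)` are uniformly bounded
away from `1`, by `1 - min (μ (ball x₁ η)) (μ (ball x₂ η))`. -/
theorem stmt_3
    {X : Type*} [MetricSpace X] [MeasurableSpace X] [BorelSpace X]
    (μ : Measure X) [IsProbabilityMeasure μ]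
    (x₁ x₂ : X) (hne : x₁ ≠ x₂)
    (hsupp₁ : ∀ U : Set X, IsOpen U → x₁ ∈ U → 0 < μ U)
    (hsupp₂ : ∀ U : Set X, IsOpen U → x₂ ∈ U → 0 < μ U) :
    ∀ η > (0 : ℝ), 4 * η < dist x₁ x₂ →
      0 < min (μ (Metric.ball x₁ η)) (μ (Metric.ball x₂ η)) ∧
      ∀ y : X, μ (Metric.ball y η) ≤
        1 - min (μ (Metric.ball x₁ η)) (μ (Metric.ball x₂ η)) :=
  stmt_3_general μ x₁ x₂ hsupp₁ hsupp₂
end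

section
/- Let A be a complex unital Banach algebra, a, b, c ∈ A, and suppose that, as t → 0 in ℝ, exp(t • a) * exp(t • b) * exp(-(t • a)) * exp(-(t • b)) - exp(t^2 • c) = o(t^2). Then a*b - b*a = c. (Extraction of the boost-translation commutator from the central holonomy of infinitesimal loops.) -/
/-!
Expansions of the form `f t = 1 + t • u + t² • v + o(t²)` multiply like polynomials truncated
at degree two, and `exp (t • x) = 1 + t • x + t² • (x * x) / 2 + o(t²)`. Hence the group
commutator of `exp (t • a)` and `exp (t • b)` is `1 + t² • (a * b - b * a) + o(t²)`, while
`exp (t² • c) = 1 + t² • c + o(t²)`, and the coefficient of `t²` in such an expansion is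
unique.
-/

open NormedSpace Asymptotics Filter Topology Finset Nat

section LittleO

variable {E : Type*} [NormedAddCommGroup E] [NormedSpace ℝ E]

theorem isLittleO_pow_smul_sq {k : ℕ} (hk : 2 < k) (w : E) :
    (fun t : ℝ => t ^ k • w) =o[𝓝 0] fun t => t ^ 2 := by
  simpa using (isLittleO_pow_pow hk).smul_isBigO (isBigO_const_one ℝ w (𝓝 (0 : ℝ)))

theorem isLittleO_norm_pow_smul_pow {m n : ℕ} (hmn : 2 < m * n) (w : E) :
    (fun t : ℝ => ‖t ^ m • w‖ ^ n) =o[𝓝 0] fun t => t ^ 2 := by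
  refine IsBigO.trans_isLittleO ?_ (isLittleO_pow_pow hmn)
  refine isBigO_iff.2 ⟨‖w‖ ^ n, Eventually.of_forall fun t => ?_⟩
  simp [norm_smul, mul_pow, pow_mul, mul_comm]

theorem eq_zero_of_sq_smul_isLittleO {w : E}
    (h : (fun t : ℝ => t ^ 2 • w) =o[𝓝 0] fun t => t ^ 2) : w = 0 := by
  have hconst : (fun _ : ℝ => w) =o[𝓝[≠] 0] fun _ => (1 : ℝ) := by
    refine ((isBigO_refl (fun t : ℝ => (t ^ 2)⁻¹) _).smul_isLittleO
      (h.mono nhdsWithin_le_nhds)).congr' ?_ ?_ <;>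
      filter_upwards [self_mem_nhdsWithin] with t (ht : t ≠ 0)
    · rw [smul_smul, inv_mul_cancel₀ (pow_ne_zero 2 ht), one_smul]
    · simp [ht]
  exact isLittleO_const_const_iff.1 hconst

end LittleO

section Expansion

variable {A : Type*} [NormedRing A] [NormedAlgebra ℝ A]

theorem isBigO_one_quadratic (u v : A) :
    (fun t : ℝ => 1 + t • u + t ^ 2 • v) =O[𝓝 0] fun _ => (1 : ℝ) :=
  ((by fun_prop : Continuous fun t : ℝ => 1 + t • u + t ^ 2 • v).tendsto 0).isBigO_one ℝ

def HasSecondOrderExpansion (f : ℝ → A) (u v : A) : Prop :=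
  (fun t => f t - (1 + t • u + t ^ 2 • v)) =o[𝓝 0] fun t => t ^ 2

namespace HasSecondOrderExpansion

variable {f g : ℝ → A} {u v u' v' : A}

theorem of_sub_isLittleO (hg : HasSecondOrderExpansion g u v)
    (h : (fun t => f t - g t) =o[𝓝 0] fun t => t ^ 2) : HasSecondOrderExpansion f u v :=
  (h.add hg).congr_left fun t => by abel

theorem unique (hv : HasSecondOrderExpansion f u v) (hv' : HasSecondOrderExpansion f u v') :
    v = v' := by
  refine (sub_eq_zero.1 <| eq_zero_of_sq_smul_isLittleO <|
    (hv.sub hv').congr_left fun t => ?_).symm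
  rw [smul_sub]
  abel

theorem isBigO_one (hf : HasSecondOrderExpansion f u v) : f =O[𝓝 0] fun _ => (1 : ℝ) := by
  have hsq : (fun t : ℝ => t ^ 2) =O[𝓝 0] fun _ => (1 : ℝ) :=
    ((continuous_pow 2).tendsto 0).isBigO_one ℝ
  exact ((hf.isBigO.trans hsq).add (isBigO_one_quadratic u v)).congr_left
    fun t => sub_add_cancel _ _

theorem mul (hf : HasSecondOrderExpansion f u v) (hg : HasSecondOrderExpansion g u' v') :
    HasSecondOrderExpansion (fun t => f t * g t) (u + u') (v + v' + u * u') := by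
  have hleft := hf.mul_isBigO hg.isBigO_one
  have hright := (isBigO_one_quadratic u v).mul_isLittleO hg
  simp only [mul_one, one_mul] at hleft hright
  have hhigher : (fun t : ℝ => t ^ 3 • (u * v' + v * u') + t ^ 4 • (v * v'))
      =o[𝓝 0] fun t => t ^ 2 :=
    (isLittleO_pow_smul_sq (by norm_num) _).add (isLittleO_pow_smul_sq (by norm_num) _)
  refine ((hleft.add hright).add hhigher).congr_left fun t => ?_
  simp only [mul_add, add_mul, mul_sub, sub_mul, one_mul, mul_one, smul_mul_assoc,
    mul_smul_comm, smul_smul, smul_add, ← pow_add]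
  module

end HasSecondOrderExpansion

variable [CompleteSpace A]

theorem isBigO_exp_sub_sum_range (n : ℕ) :
    (fun x : A => exp x - ∑ k ∈ range n, (k !⁻¹ : ℝ) • x ^ k) =O[𝓝 0] fun x => ‖x‖ ^ n := by
  simpa [FormalMultilinearSeries.partialSum, expSeries_apply_eq] using
    (exp_hasFPowerSeriesAt_zero (𝕂 := ℝ) (𝔸 := A)).isBigO_sub_partialSum_pow n

theorem hasSecondOrderExpansion_exp_smul (x : A) :
    HasSecondOrderExpansion (fun t => exp (t • x)) x ((2⁻¹ : ℝ) • (x * x)) := by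
  have hx : Tendsto (fun t : ℝ => t • x) (𝓝 0) (𝓝 0) :=
    (continuous_id.smul continuous_const).tendsto' 0 0 (zero_smul ℝ x)
  have hcube : (fun t : ℝ => ‖t • x‖ ^ 3) =o[𝓝 0] fun t => t ^ 2 := by
    simpa using isLittleO_norm_pow_smul_pow (m := 1) (n := 3) (by norm_num) x
  refine (((isBigO_exp_sub_sum_range 3).comp_tendsto hx).trans_isLittleO hcube).congr_left
    fun t => ?_
  simp [Finset.sum_range_succ, pow_two, smul_smul, mul_comm]

theorem hasSecondOrderExpansion_exp_sq_smul (x : A) :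
    HasSecondOrderExpansion (fun t => exp (t ^ 2 • x)) 0 x := by
  have hx : Tendsto (fun t : ℝ => t ^ 2 • x) (𝓝 0) (𝓝 0) :=
    ((continuous_pow 2).smul continuous_const).tendsto' 0 0 (by simp)
  refine (((isBigO_exp_sub_sum_range 2).comp_tendsto hx).trans_isLittleO
    (isLittleO_norm_pow_smul_pow (m := 2) (n := 2) (by norm_num) x)).congr_left fun t => ?_
  simp [Finset.sum_range_succ, add_comm]

theorem commutator_eq_of_isLittleO (a b c : A)
    (h : (fun t : ℝ => exp (t • a) * exp (t • b) * exp (-(t • a)) * exp (-(t • b))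
        - exp (t ^ 2 • c)) =o[𝓝 0] fun t => t ^ 2) :
    a * b - b * a = c := by
  have hloop : HasSecondOrderExpansion
      (fun t : ℝ => exp (t • a) * exp (t • b) * exp (-(t • a)) * exp (-(t • b)))
      0 (a * b - b * a) := by
    convert (((hasSecondOrderExpansion_exp_smul a).mul (hasSecondOrderExpansion_exp_smul b)).mul
      (hasSecondOrderExpansion_exp_smul (-a))).mul (hasSecondOrderExpansion_exp_smul (-b))
      using 1
    · simp only [smul_neg]
    · abel
    · simp only [add_mul, mul_neg, neg_mul]
      module
  exact hloop.unique ((hasSecondOrderExpansion_exp_sq_smul c).of_sub_isLittleO h)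

end Expansion

theorem stmt_7_general
    {A : Type*} [NormedRing A] [NormedAlgebra ℂ A] [CompleteSpace A]
    (a b c : A)
    (h : (fun t : ℝ =>
        exp (t • a) * exp (t • b) * exp (-(t • a)) * exp (-(t • b))
          - exp (t ^ 2 • c))
      =o[nhds (0 : ℝ)] (fun t : ℝ => t ^ 2)) :
    a * b - b * a = c :=
  commutator_eq_of_isLittleO a b c h

/-- Extraction of the commutator from the central holonomy of infinitesimal loops:
if `exp(ta) exp(tb) exp(-ta) exp(-tb) - exp(t² c) = o(t²)` as `t → 0`, then `[a,b] = c`. -/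
theorem stmt_7
    {A : Type*} [NormedRing A] [NormedAlgebra ℂ A] [CompleteSpace A]
    [NormedSpace ℝ A] [IsScalarTower ℝ ℂ A]
    (a b c : A)
    (h : (fun t : ℝ =>
        exp (t • a) * exp (t • b) * exp (-(t • a)) * exp (-(t • b))
          - exp (t ^ 2 • c))
      =o[nhds (0 : ℝ)] (fun t : ℝ => t ^ 2)) :
    a * b - b * a = c :=
  stmt_7_general a b c h
end

section
/- (Exact Weyl relation.) Let A be a complex unital Banach algebra and a, b ∈ A, and set z := a*b - b*a. If z commutes with a and z commutes with b, then exp a * exp b = exp z * (exp b * exp a). -/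
/-!
Since `z` commutes with `a`, `[a ^ n, b] = n • z * a ^ (n - 1)`, and summing the exponential series
gives `exp a * b = (b + z) * exp a`. Exponentiating this semiconjugacy yields
`exp a * exp b = exp (b + z) * exp a`, and `exp (b + z) = exp z * exp b` because `z` commutes with `b`.
-/

open NormedSpace

theorem pow_succ_mul_sub_mul_pow_succ {R : Type*} [Ring R] {a b z : R}
    (hz : a * b - b * a = z) (haz : Commute a z) (n : ℕ) :
    a ^ (n + 1) * b - b * a ^ (n + 1) = (n + 1) • (z * a ^ n) := by
  induction n with
  | zero => simpa using hz
  | succ n ih =>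
    calc a ^ (n + 2) * b - b * a ^ (n + 2)
        = a * (a ^ (n + 1) * b - b * a ^ (n + 1)) + (a * b - b * a) * a ^ (n + 1) := by
          rw [pow_succ' a (n + 1)]; noncomm_ring
      _ = (n + 1) • (a * z * a ^ n) + z * a ^ (n + 1) := by
          rw [ih, hz, mul_smul_comm, mul_assoc]
      _ = (n + 2) • (z * a ^ (n + 1)) := by
          rw [haz.eq, mul_assoc, ← pow_succ', ← succ_nsmul]

section Exp

variable {𝔸 : Type*} [NormedRing 𝔸] [NormedAlgebra ℚ 𝔸] [CompleteSpace 𝔸]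

theorem exp_mul_eq_add_mul_exp {a b z : 𝔸} (hz : a * b - b * a = z) (haz : Commute a z) :
    exp a * b = (b + z) * exp a := by
  have hexp := exp_series_hasSum_exp' (𝕂 := ℚ) a
  have hcomm : HasSum (fun n ↦ (n.factorial⁻¹ : ℚ) • (a ^ n * b - b * a ^ n))
      (exp a * b - b * exp a) := by
    simpa only [smul_sub, smul_mul_assoc, mul_smul_comm] using
      (hexp.mul_right b).sub (hexp.mul_left b)
  have hterm (n : ℕ) : ((n + 1).factorial⁻¹ : ℚ) • (a ^ (n + 1) * b - b * a ^ (n + 1))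
      = z * ((n.factorial⁻¹ : ℚ) • a ^ n) := by
    rw [pow_succ_mul_sub_mul_pow_succ hz haz, ← Nat.cast_smul_eq_nsmul ℚ, smul_smul,
      Nat.factorial_succ, Nat.cast_mul, mul_inv_rev, inv_mul_cancel_right₀ (by positivity),
      mul_smul_comm]
  have hbracket : exp a * b - b * exp a = z * exp a := by
    refine hcomm.unique ((hasSum_nat_add_iff' 1).mp ?_)
    simpa [hterm] using hexp.mul_left z
  rw [add_mul, ← hbracket]
  abel

end Exp

/-- Exact Weyl relation: if `z = [a,b]` commutes with `a` and `b`, then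
`exp a * exp b = exp z * (exp b * exp a)`. -/
theorem stmt_9
    {A : Type*} [NormedRing A] [NormedAlgebra ℂ A] [CompleteSpace A]
    (a b : A) (z : A) (hz : z = a * b - b * a)
    (hza : z * a = a * z) (hzb : z * b = b * z) :
    exp a * exp b = exp z * (exp b * exp a) := by
  let : NormedAlgebra ℚ A := .restrictScalars ℚ ℂ A
  have hconj : SemiconjBy (exp a) b (b + z) :=
    exp_mul_eq_add_mul_exp hz.symm (Commute.symm hza)
  rw [hconj.exp_right.eq, add_comm, exp_add_of_commute hzb, mul_assoc]
end

section
/- (Algebraic core of the free-particle Hamiltonian.) Let A be an associative unital algebra over ℂ, ħ and m real constants, and h ∈ A, p, k, j : Fin 3 → A families of elements satisfying: h * p i = p i * h for all i; p i * p l = p l * p i for all i, l; k i * h - h * k i = (Complex.I * ħ) • p i for all i; k i * p l - p l * k i = (if i = l then (Complex.I * ħ * m) else 0) • 1 for all i, l; h * j i = j i * h for all i; and j i * p l - p l * j i = (Complex.I * ħ) • (∑ r, (ε i l r : ℂ) • p r) for all i, l, where ε is the Levi-Civita symbol on Fin 3. Define c := (2 * m : ℂ) • h - ∑ i, p i * p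 i. Then c commutes with h, with each p i, with each k i, and with each j i. -/
/-- The Levi-Civita symbol on `Fin 3`: the sign of the permutation `(i, j, k)` when the
three indices are distinct, and `0` otherwise. -/
def leviCivita (i j k : Fin 3) : ℤ :=
  (((j : ℕ) : ℤ) - ((i : ℕ) : ℤ)) * (((k : ℕ) : ℤ) - ((j : ℕ) : ℤ))
    * (((k : ℕ) : ℤ) - ((i : ℕ) : ℤ)) / 2

/-- Algebraic core of the free-particle Hamiltonian: the Casimir element
`c = 2mH - P²` commutes with `H`, `P`, `K`, and `J`. -/
theorem stmt_14
    {A : Type*} [Ring A] [Algebra ℂ A]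
    (hbar m : ℝ) (h : A) (p k j : Fin 3 → A)
    (hhp : ∀ i : Fin 3, h * p i = p i * h)
    (hpp : ∀ i l : Fin 3, p i * p l = p l * p i)
    (hkh : ∀ i : Fin 3, k i * h - h * k i = (Complex.I * (hbar : ℂ)) • p i)
    (hkp : ∀ i l : Fin 3, k i * p l - p l * k i =
      (if i = l then (Complex.I * (hbar : ℂ) * (m : ℂ)) else 0) • (1 : A))
    (hhj : ∀ i : Fin 3, h * j i = j i * h)
    (hjp : ∀ i l : Fin 3, j i * p l - p l * j i =
      (Complex.I * (hbar : ℂ)) • (∑ r, (leviCivita i l r : ℂ) • p r))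
    (c : A) (hc : c = (2 * (m : ℂ)) • h - ∑ i, p i * p i) :
    c * h = h * c ∧ (∀ i : Fin 3, c * p i = p i * c) ∧
      (∀ i : Fin 3, c * k i = k i * c) ∧ (∀ i : Fin 3, c * j i = j i * c) := by
  have main : ∀ x : A, c * x - x * c = (2 * (m : ℂ)) • (h * x - x * h)
      - ∑ l, (p l * (p l * x - x * p l) + (p l * x - x * p l) * p l) := by
    intro x
    rw [hc]
    simp only [sub_mul, mul_sub, smul_mul_assoc, mul_smul_comm, Finset.sum_mul,
      Finset.mul_sum, smul_sub, add_mul, mul_add, mul_assoc, Finset.sum_add_distrib,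
      Finset.sum_sub_distrib]
    abel
  refine ⟨?_, ?_, ?_, ?_⟩
  · rw [← sub_eq_zero, main h]
    simp [hhp]
  · intro i
    rw [← sub_eq_zero, main (p i)]
    simp only [hhp, Fin.sum_univ_three]
    fin_cases i <;>
      simp [hpp 0 1, hpp 0 2, hpp 1 2, hpp 0 0, hpp 1 1, hpp 2 2]
  · intro i
    rw [← sub_eq_zero, main (k i)]
    have e1 : h * k i - k i * h = -((Complex.I * (hbar : ℂ)) • p i) := by
      rw [← hkh i]; abel
    have e2 : ∀ l, p l * k i - k i * p l
        = -((if i = l then (Complex.I * (hbar : ℂ) * (m : ℂ)) else 0) • (1 : A)) := by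
      intro l; rw [← hkp i l]; abel
    rw [e1]
    simp only [e2, mul_neg, neg_mul, mul_ite, ite_mul, mul_zero, zero_mul,
      mul_smul_comm, smul_mul_assoc, mul_one, one_mul, ite_smul, zero_smul,
      Finset.sum_add_distrib, Finset.sum_neg_distrib, Finset.sum_ite_eq,
      Finset.mem_univ, if_true]
    module
  · intro i
    rw [← sub_eq_zero, main (j i)]
    have e3 : ∀ l, p l * j i - j i * p l
        = -((Complex.I * (hbar : ℂ)) • (∑ r, (leviCivita i l r : ℂ) • p r)) := by
      intro l; rw [← hjp i l]; abel
    simp only [e3, hhj, sub_self, smul_zero, zero_sub, neg_eq_zero, Fin.sum_univ_three]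
    fin_cases i <;>
      · simp only [show (leviCivita 0 0 0 : ℂ) = 0 from by norm_num [leviCivita],
          Fin.isValue]
        norm_num [leviCivita]
end
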